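/- arXiv:1304.3710 — 2 statements merged into one kernel-verified Lean document; each statement's English description precedes it below -/
import Mathlib

section
/- For all ξ₁, η₁, ξ₂, η₂ ∈ C_c²((0,∞)): ∫₀^∞ ∫_ℝ (ξ₁ *₊ η₁)(b,a) · conj((ξ₂ *₋ η₂)(b,a)) db a⁻² da = 0 (and the integrand is integrable, so the integral is well defined). That is, coefficient functions of the two inequivalent infinite-dimensional irreducible representations π₊ and π₋ of the ax+b group are orthogonal in L²(G). -/
open MeasureTheory Set

/-- Coefficient function of the representation `π₊` of the real `ax+b` group:
`(ξ *₊ η)(b,a) = ∫₀^∞ e^{-2πibt} ξ(at) conj(η(t)) t⁻¹ dt`. -/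
noncomputable def coeffP (ξ η : ℝ → ℂ) (b a : ℝ) : ℂ :=
  ∫ t in Ioi (0 : ℝ),
    Complex.exp (-(2 * Real.pi * b * t : ℝ) * Complex.I) * ξ (a * t)
      * starRingEnd ℂ (η t) * (t : ℂ)⁻¹

/-- Coefficient function of the representation `π₋` of the real `ax+b` group:
`(ξ *₋ η)(b,a) = ∫₀^∞ e^{2πibt} ξ(at) conj(η(t)) t⁻¹ dt`. -/
noncomputable def coeffM (ξ η : ℝ → ℂ) (b a : ℝ) : ℂ :=
  ∫ t in Ioi (0 : ℝ),
    Complex.exp ((2 * Real.pi * b * t : ℝ) * Complex.I) * ξ (a * t)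
      * starRingEnd ℂ (η t) * (t : ℂ)⁻¹

/-- `C_c²((0,∞))`: twice continuously differentiable complex-valued functions on `ℝ`
with compact support contained in `(0,∞)`. -/
def CcTwo (f : ℝ → ℂ) : Prop :=
  ContDiff ℝ 2 f ∧ HasCompactSupport f ∧ tsupport f ⊆ Ioi (0 : ℝ)

/-- Left Haar measure `a⁻² db da` of the `ax+b` group, modelled on `ℝ × (0,∞)`
(first coordinate `b`, second coordinate `a`). -/
noncomputable def muG : Measure (ℝ × ℝ) :=
  (((volume : Measure ℝ).prod ((volume : Measure ℝ).restrict (Ioi (0 : ℝ)))).withDensity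
    fun p => ENNReal.ofReal ((p.2 ^ 2)⁻¹))

open Complex Function
open scoped FourierTransform Real

/-!
Put `F_a(t) = ξ₁(at) conj(η₁(t)) t⁻¹` and `G_a(t) = conj(ξ₂(at)) η₂(t) t⁻¹`. Then
`(ξ₁ *₊ η₁)(b,a) = 𝓕 F_a (b)` and `conj((ξ₂ *₋ η₂)(b,a)) = 𝓕 G_a (b)`, so by self-adjointness of
the Fourier transform and Fourier inversion the inner `db`-integral is `∫ F_a(t) G_a(-t) dt`,
which vanishes because `F_a` and `G_a` are supported in `t > 0`.

For integrability: `(a,t) ↦ F_a(t)` is `C²` with compact support, so integrating by parts twice in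
`t` gives `|𝓕 F_a (b)| ≤ C (1 + b²)⁻¹` uniformly in `a`; moreover `F_a = 0` unless `a` lies in a
compact interval `[α, β] ⊆ (0,∞)`, on which the Haar density `a⁻²` is bounded.
-/

section Fourier

variable {f g : ℝ → ℂ}

theorem norm_fourier_deriv_deriv (hf : ContDiff ℝ 2 f) (hs : HasCompactSupport f) (b : ℝ) :
    ‖𝓕 (deriv (deriv f)) b‖ = 4 * π ^ 2 * b ^ 2 * ‖𝓕 f b‖ := by
  have hf1 : ContDiff ℝ 1 (deriv f) := hf.deriv'
  have E1 := Real.fourier_deriv (hf.continuous.integrable_of_hasCompactSupport hs)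
    (hf.differentiable two_ne_zero) (hf1.continuous.integrable_of_hasCompactSupport hs.deriv)
  have E2 := Real.fourier_deriv (hf1.continuous.integrable_of_hasCompactSupport hs.deriv)
    (hf1.differentiable one_ne_zero)
    ((hf1.continuous_deriv le_rfl).integrable_of_hasCompactSupport hs.deriv.deriv)
  rw [E2, E1]
  simp only [smul_eq_mul, norm_mul, norm_I, norm_real, Real.norm_eq_abs, norm_ofNat]
  rw [abs_of_pos Real.pi_pos, ← sq_abs b]
  ring

theorem norm_fourier_mul_one_add_sq_le (hf : ContDiff ℝ 2 f) (hs : HasCompactSupport f) (b : ℝ) :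
    ‖𝓕 f b‖ * (1 + b ^ 2) ≤ (∫ t, ‖f t‖) + ∫ t, ‖deriv (deriv f) t‖ := by
  have h₀ : ‖𝓕 f b‖ ≤ ∫ t, ‖f t‖ :=
    VectorFourier.norm_fourierIntegral_le_integral_norm _ _ _ _ _
  have h₂ : ‖𝓕 (deriv (deriv f)) b‖ ≤ ∫ t, ‖deriv (deriv f) t‖ :=
    VectorFourier.norm_fourierIntegral_le_integral_norm _ _ _ _ _
  rw [norm_fourier_deriv_deriv hf hs] at h₂
  have hπ : 1 ≤ 4 * π ^ 2 := by nlinarith [Real.pi_gt_three]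
  nlinarith [mul_le_mul_of_nonneg_right hπ (mul_nonneg (sq_nonneg b) (norm_nonneg (𝓕 f b)))]

theorem integrable_fourier_of_contDiff_two (hf : ContDiff ℝ 2 f) (hs : HasCompactSupport f) :
    Integrable (𝓕 f) := by
  refine (integrable_inv_one_add_sq.const_mul
    ((∫ t, ‖f t‖) + ∫ t, ‖deriv (deriv f) t‖)).mono'
    (VectorFourier.fourierIntegral_continuous Real.continuous_fourierChar continuous_inner
      (hf.continuous.integrable_of_hasCompactSupport hs)).aestronglyMeasurable
    (ae_of_all _ fun b => ?_)
  rw [le_mul_inv_iff₀ (by positivity)]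
  exact norm_fourier_mul_one_add_sq_le hf hs b

theorem integral_fourier_mul_fourier_eq_zero (hf : Integrable f) (hg : Continuous g)
    (hgi : Integrable g) (hFg : Integrable (𝓕 g)) (hf0 : ∀ t ≤ 0, f t = 0)
    (hg0 : ∀ t ≤ 0, g t = 0) : ∫ b, 𝓕 f b * 𝓕 g b = 0 := by
  have hflip : (innerₗ ℝ).flip = innerₗ ℝ :=
    LinearMap.ext₂ fun x y => real_inner_comm x y
  have hself : ∫ b, 𝓕 f b * 𝓕 g b = ∫ t, f t * 𝓕 (𝓕 g) t := by
    have := VectorFourier.integral_fourierIntegral_smul_eq_flip (L := innerₗ ℝ)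
      Real.continuous_fourierChar continuous_inner hf hFg
    rw [hflip] at this
    exact this
  have hinv : ∀ t, 𝓕 (𝓕 g) t = g (-t) := fun t => by
    rw [← neg_neg t, ← Real.fourierInv_eq_fourier_neg, hg.fourierInv_fourier_eq hgi hFg,
      neg_neg]
  have hvanish : ∀ t, f t * 𝓕 (𝓕 g) t = 0 := fun t => by
    rcases le_or_gt t 0 with ht | ht
    · rw [hf0 t ht, zero_mul]
    · rw [hinv, hg0 (-t) (by linarith), mul_zero]
  simp only [hself, hvanish, integral_zero]

end Fourier

section Family

variable {F : ℝ → ℝ → ℂ}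

theorem ContDiff.uncurry_deriv {n : WithTop ℕ∞} (hF : ContDiff ℝ (n + 1) (uncurry F)) :
    ContDiff ℝ n (uncurry fun a => deriv (F a)) := by
  have h : ContDiff ℝ n fun p : ℝ × ℝ => fderiv ℝ (F p.1) p.2 :=
    ContDiff.fderiv (f := fun p : ℝ × ℝ => F p.1) (hF.comp (contDiff_fst.fst.prodMk contDiff_snd))
      contDiff_snd le_rfl
  convert h.clm_apply contDiff_const using 1
  exact funext fun p => fderiv_apply_one_eq_deriv.symm

theorem tsupport_apply_subset_preimage_tsupport_uncurry (a : ℝ) :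
    tsupport (F a) ⊆ Prod.mk a ⁻¹' tsupport (uncurry F) :=
  tsupport_comp_subset_preimage (uncurry F) (Continuous.prodMk_right a)

theorem tsupport_apply_subset_image_snd (a : ℝ) :
    tsupport (F a) ⊆ Prod.snd '' tsupport (uncurry F) :=
  fun t ht => ⟨(a, t), tsupport_apply_subset_preimage_tsupport_uncurry a ht, rfl⟩

theorem HasCompactSupport.apply_of_uncurry (hF : HasCompactSupport (uncurry F)) (a : ℝ) :
    HasCompactSupport (F a) :=
  (hF.image continuous_snd).of_isClosed_subset (isClosed_tsupport _)
    (tsupport_apply_subset_image_snd a)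

theorem integral_norm_le_mul_measureReal {E : Type*} [NormedAddCommGroup E] {g : ℝ → E}
    {S : Set ℝ} {M : ℝ} (hS : IsCompact S) (hgS : support g ⊆ S) (hM : ∀ t, ‖g t‖ ≤ M) :
    ∫ t, ‖g t‖ ≤ M * volume.real S := by
  rw [← setIntegral_eq_integral_of_forall_compl_eq_zero fun t ht => by
    rw [notMem_support.1 fun h => ht (hgS h), norm_zero]]
  exact (Real.le_norm_self _).trans
    (norm_setIntegral_le_of_norm_le_const hS.measure_lt_top fun t _ => by simpa using hM t)

theorem exists_norm_fourier_le_of_hasCompactSupport_uncurry (hF : ContDiff ℝ 2 (uncurry F))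
    (hs : HasCompactSupport (uncurry F)) :
    ∃ C, ∀ a b, ‖𝓕 (F a) b‖ ≤ C * (1 + b ^ 2)⁻¹ := by
  set S := Prod.snd '' tsupport (uncurry F)
  have hS : IsCompact S := hs.image continuous_snd
  have hsupp₂ : ∀ a, support (deriv (deriv (F a))) ⊆ tsupport (F a) := fun a =>
    support_deriv_subset.trans tsupport_deriv_subset
  have hF₂ : Continuous (uncurry fun a => deriv (deriv (F a))) :=
    (ContDiff.uncurry_deriv (n := 0) (ContDiff.uncurry_deriv (n := 1) hF)).continuous
  have hF₂s : HasCompactSupport (uncurry fun a => deriv (deriv (F a))) :=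
    hs.mono' fun p hp => tsupport_apply_subset_preimage_tsupport_uncurry p.1 (hsupp₂ p.1 hp)
  obtain ⟨M₀, hM₀⟩ := hF.continuous.bounded_above_of_compact_support hs
  obtain ⟨M₂, hM₂⟩ := hF₂.bounded_above_of_compact_support hF₂s
  refine ⟨(M₀ + M₂) * volume.real S, fun a b => ?_⟩
  have hFa : ContDiff ℝ 2 (F a) := hF.comp (contDiff_const.prodMk contDiff_id)
  have h₀ : ∫ t, ‖F a t‖ ≤ M₀ * volume.real S :=
    integral_norm_le_mul_measureReal hS
      ((subset_tsupport _).trans (tsupport_apply_subset_image_snd a)) fun t => hM₀ (a, t)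
  have h₂ : ∫ t, ‖deriv (deriv (F a)) t‖ ≤ M₂ * volume.real S :=
    integral_norm_le_mul_measureReal hS
      ((hsupp₂ a).trans (tsupport_apply_subset_image_snd a)) fun t => hM₂ (a, t)
  rw [le_mul_inv_iff₀ (by positivity)]
  linarith [norm_fourier_mul_one_add_sq_le hFa (hs.apply_of_uncurry a) b]

theorem continuous_fourier_uncurry (hF : Continuous (uncurry F))
    (hs : HasCompactSupport (uncurry F)) : Continuous fun p : ℝ × ℝ => 𝓕 (F p.2) p.1 := by
  have hS : IsCompact (Prod.snd '' tsupport (uncurry F)) := hs.image continuous_snd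
  have hset : ∀ p : ℝ × ℝ, 𝓕 (F p.2) p.1
      = ∫ t in Prod.snd '' tsupport (uncurry F), 𝐞 (-inner ℝ t p.1) • F p.2 t := fun p => by
    rw [Real.fourier_eq, setIntegral_eq_integral_of_forall_compl_eq_zero fun t ht => by
      rw [image_eq_zero_of_notMem_tsupport fun h => ht (tsupport_apply_subset_image_snd _ h),
        smul_zero]]
  simp only [hset]
  refine continuous_parametric_integral_of_continuous ?_ hS
  exact (Real.continuous_fourierChar.comp (continuous_inner.comp
    (continuous_snd.prodMk continuous_fst.fst)).neg).smul
      (hF.comp (continuous_fst.snd.prodMk continuous_snd))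

end Family

noncomputable def coeffKernel (ξ η : ℝ → ℂ) (a t : ℝ) : ℂ :=
  ξ (a * t) * starRingEnd ℂ (η t) * (t : ℂ)⁻¹

section CoeffKernel

variable {ξ η : ℝ → ℂ}

theorem coeffP_eq_fourier_coeffKernel (hη : tsupport η ⊆ Ioi 0) (b a : ℝ) :
    coeffP ξ η b a = 𝓕 (coeffKernel ξ η a) b := by
  rw [coeffP, setIntegral_eq_integral_of_forall_compl_eq_zero fun t ht => by
    rw [image_eq_zero_of_notMem_tsupport fun h => ht (hη h), map_zero, mul_zero, zero_mul],
    Real.fourier_eq']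
  congr 1
  funext t
  simp only [coeffKernel, smul_eq_mul, RCLike.inner_apply, conj_trivial]
  push_cast
  ring_nf

theorem starRingEnd_coeffM (ξ η : ℝ → ℂ) (b a : ℝ) :
    starRingEnd ℂ (coeffM ξ η b a)
      = coeffP (fun t => starRingEnd ℂ (ξ t)) (fun t => starRingEnd ℂ (η t)) b a := by
  rw [coeffM, coeffP, ← integral_conj]
  congr 1
  funext t
  simp only [map_mul, map_inv₀, conj_ofReal, ← exp_conj, conj_I, RingHomCompTriple.comp_apply]
  ring_nf

theorem support_coeffKernel_subset (a : ℝ) : support (coeffKernel ξ η a) ⊆ support η :=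
  fun t ht hη => ht (by simp [coeffKernel, hη])

theorem support_uncurry_coeffKernel_subset {εξ Mξ εη Mη : ℝ} (hεξ : 0 < εξ) (hεη : 0 < εη)
    (hξ : support ξ ⊆ Icc εξ Mξ) (hη : support η ⊆ Icc εη Mη) :
    support (uncurry (coeffKernel ξ η)) ⊆ Icc (εξ / Mη) (Mξ / εη) ×ˢ Icc εη Mη := by
  rintro ⟨a, t⟩ hat
  have hat' : a * t ∈ Icc εξ Mξ := hξ fun h => hat (by simp [coeffKernel, h])
  have ht : t ∈ Icc εη Mη := hη (support_coeffKernel_subset a hat)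
  have ht0 : 0 < t := hεη.trans_le ht.1
  have ha0 : 0 < a := pos_of_mul_pos_left (hεξ.trans_le hat'.1) ht0.le
  refine ⟨⟨?_, ?_⟩, ht⟩
  · rw [div_le_iff₀ (ht0.trans_le ht.2)]
    nlinarith [hat'.1, ht.2]
  · rw [le_div_iff₀ hεη]
    nlinarith [hat'.2, ht.1]

theorem contDiff_conj_mul_inv {n : WithTop ℕ∞} (hη : ContDiff ℝ n η) (hη0 : tsupport η ⊆ Ioi 0) :
    ContDiff ℝ n fun t : ℝ => starRingEnd ℂ (η t) * (t : ℂ)⁻¹ := by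
  refine contDiff_iff_contDiffAt.2 fun t => ?_
  by_cases ht : t ∈ tsupport η
  · exact (conjLIE.contDiff.comp hη).contDiffAt.mul
      (ofRealCLM.contDiff.contDiffAt.inv (ofReal_ne_zero.2 (hη0 ht).ne'))
  · refine (contDiffAt_const (c := (0 : ℂ))).congr_of_eventuallyEq ?_
    filter_upwards [(isClosed_tsupport η).isOpen_compl.mem_nhds ht] with s hs
    rw [image_eq_zero_of_notMem_tsupport hs, map_zero, zero_mul]

theorem contDiff_uncurry_coeffKernel {n : WithTop ℕ∞} (hξ : ContDiff ℝ n ξ)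
    (hη : ContDiff ℝ n η) (hη0 : tsupport η ⊆ Ioi 0) :
    ContDiff ℝ n (uncurry (coeffKernel ξ η)) := by
  have hkernel : uncurry (coeffKernel ξ η)
      = fun p : ℝ × ℝ => ξ (p.1 * p.2) * (starRingEnd ℂ (η p.2) * (p.2 : ℂ)⁻¹) :=
    funext fun p => mul_assoc _ _ _
  rw [hkernel]
  exact (hξ.comp (contDiff_fst.mul contDiff_snd)).mul
    ((contDiff_conj_mul_inv hη hη0).comp contDiff_snd)

end CoeffKernel

theorem exists_pos_tsupport_subset_Icc {E : Type*} [NormedAddCommGroup E] {f : ℝ → E}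
    (hf : HasCompactSupport f) (hf0 : tsupport f ⊆ Ioi 0) :
    ∃ ε M, 0 < ε ∧ ε ≤ M ∧ tsupport f ⊆ Icc ε M := by
  -- adjoining `1` makes the compact set nonempty, so that its infimum is one of its points
  set K := tsupport f ∪ {1}
  have hK : IsCompact K := hf.union isCompact_singleton
  have hKne : K.Nonempty := ⟨1, Or.inr rfl⟩
  have hKpos : K ⊆ Ioi 0 := union_subset hf0 (singleton_subset_iff.2 (mem_Ioi.2 one_pos))
  exact ⟨sInf K, sSup K, hKpos (hK.sInf_mem hKne), csInf_le_csSup hKne hK.bddBelow hK.bddAbove,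
    fun t ht => ⟨csInf_le hK.bddBelow (Or.inl ht), le_csSup hK.bddAbove (Or.inl ht)⟩⟩

namespace CcTwo

variable {f ξ η : ℝ → ℂ}

theorem conj (hf : CcTwo f) : CcTwo fun t => starRingEnd ℂ (f t) := by
  obtain ⟨hf2, hfs, hf0⟩ := hf
  have hsupp : support (fun t => starRingEnd ℂ (f t)) = support f := by
    ext t
    simp
  refine ⟨conjLIE.contDiff.comp hf2, hfs.comp_left (map_zero _), ?_⟩
  rwa [tsupport, hsupp]

theorem exists_support_uncurry_coeffKernel_subset (hξ : CcTwo ξ) (hη : CcTwo η) :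
    ∃ α β ε M, 0 < α ∧ support (uncurry (coeffKernel ξ η)) ⊆ Icc α β ×ˢ Icc ε M := by
  obtain ⟨εξ, Mξ, hεξ, -, hξ⟩ := exists_pos_tsupport_subset_Icc hξ.2.1 hξ.2.2
  obtain ⟨εη, Mη, hεη, hεMη, hη⟩ := exists_pos_tsupport_subset_Icc hη.2.1 hη.2.2
  exact ⟨_, _, _, _, div_pos hεξ (hεη.trans_le hεMη), support_uncurry_coeffKernel_subset hεξ hεη
    ((subset_tsupport ξ).trans hξ) ((subset_tsupport η).trans hη)⟩

theorem hasCompactSupport_uncurry_coeffKernel (hξ : CcTwo ξ) (hη : CcTwo η) :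
    HasCompactSupport (uncurry (coeffKernel ξ η)) := by
  obtain ⟨α, β, ε, M, -, hsupp⟩ := hξ.exists_support_uncurry_coeffKernel_subset hη
  exact HasCompactSupport.intro (isCompact_Icc.prod isCompact_Icc) fun p hp =>
    notMem_support.1 fun h => hp (hsupp h)

theorem exists_pos_coeffKernel_eq_zero (hξ : CcTwo ξ) (hη : CcTwo η) :
    ∃ α β, 0 < α ∧ ∀ a ∉ Icc α β, coeffKernel ξ η a = 0 := by
  obtain ⟨α, β, ε, M, hα, hsupp⟩ := hξ.exists_support_uncurry_coeffKernel_subset hη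
  exact ⟨α, β, hα, fun a ha => funext fun t =>
    notMem_support.1 fun h => ha (mem_prod.1 (hsupp (a := (a, t)) h)).1⟩

end CcTwo

theorem integral_fourier_coeffKernel_mul_eq_zero {ξ₁ η₁ ξ₂ η₂ : ℝ → ℂ} (hξ₁ : Continuous ξ₁)
    (hη₁ : CcTwo η₁) (hξ₂ : ContDiff ℝ 2 ξ₂) (hη₂ : CcTwo η₂) (a : ℝ) :
    ∫ b, 𝓕 (coeffKernel ξ₁ η₁ a) b * 𝓕 (coeffKernel ξ₂ η₂ a) b = 0 := by
  have hF : Continuous (coeffKernel ξ₁ η₁ a) :=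
    ((contDiff_uncurry_coeffKernel (n := 0) (contDiff_zero.2 hξ₁) (hη₁.1.of_le (by norm_num))
      hη₁.2.2).continuous).uncurry_left a
  have hG : ContDiff ℝ 2 (coeffKernel ξ₂ η₂ a) :=
    (contDiff_uncurry_coeffKernel hξ₂ hη₂.1 hη₂.2.2).comp (contDiff_const.prodMk contDiff_id)
  have hGs : HasCompactSupport (coeffKernel ξ₂ η₂ a) :=
    hη₂.2.1.mono (support_coeffKernel_subset a)
  have hzero : ∀ {ξ η : ℝ → ℂ}, CcTwo η → ∀ t ≤ 0, coeffKernel ξ η a t = 0 :=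
    fun hη t ht => notMem_support.1 fun h =>
      (not_lt.2 ht) (hη.2.2 (subset_tsupport _ (support_coeffKernel_subset a h)))
  exact integral_fourier_mul_fourier_eq_zero
    (hF.integrable_of_hasCompactSupport (hη₁.2.1.mono (support_coeffKernel_subset a)))
    hG.continuous (hG.continuous.integrable_of_hasCompactSupport hGs)
    (integrable_fourier_of_contDiff_two hG hGs) (hzero hη₁) (hzero hη₂)

section HaarMeasure

theorem measurable_ofReal_inv_sq_snd :
    Measurable fun p : ℝ × ℝ => ENNReal.ofReal ((p.2 ^ 2)⁻¹) := by
  fun_prop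

theorem integrable_muG_iff {Φ : ℝ × ℝ → ℂ} :
    Integrable Φ muG ↔ Integrable (fun p => (p.2 ^ 2)⁻¹ • Φ p)
      ((volume : Measure ℝ).prod (volume.restrict (Ioi 0))) := by
  rw [muG, integrable_withDensity_iff_integrable_smul' measurable_ofReal_inv_sq_snd
    (ae_of_all _ fun _ => ENNReal.ofReal_lt_top)]
  simp_rw [ENNReal.toReal_ofReal (inv_nonneg.2 (sq_nonneg _))]

theorem integral_muG_eq {Φ : ℝ × ℝ → ℂ} (hΦ : Integrable Φ muG) :
    ∫ p, Φ p ∂muG = ∫ a in Ioi 0, (a ^ 2)⁻¹ • ∫ b, Φ (b, a) := by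
  rw [muG, integral_withDensity_eq_integral_toReal_smul measurable_ofReal_inv_sq_snd
    (ae_of_all _ fun _ => ENNReal.ofReal_lt_top)]
  simp_rw [ENNReal.toReal_ofReal (inv_nonneg.2 (sq_nonneg _))]
  rw [integral_prod_symm _ (integrable_muG_iff.1 hΦ)]
  simp_rw [integral_smul]

theorem integrable_muG_of_norm_le {Φ : ℝ × ℝ → ℂ} (hΦ : Continuous Φ) {α β C : ℝ} (hα : 0 < α)
    (hsupp : ∀ b, ∀ a ∉ Icc α β, Φ (b, a) = 0) (hC : ∀ b a, ‖Φ (b, a)‖ ≤ C * (1 + b ^ 2)⁻¹) :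
    Integrable Φ muG := by
  rw [integrable_muG_iff]
  have hD : Integrable (fun p : ℝ × ℝ => (C * (α ^ 2)⁻¹ * (1 + p.1 ^ 2)⁻¹)
      * (Icc α β).indicator 1 p.2) ((volume : Measure ℝ).prod (volume.restrict (Ioi 0))) :=
    (integrable_inv_one_add_sq.const_mul _).mul_prod
      ((integrable_indicator_iff measurableSet_Icc).2 (integrableOn_const
        ((Measure.restrict_apply_le _ _).trans_lt measure_Icc_lt_top).ne))
  refine hD.mono' ((measurable_snd.pow_const 2).inv.aestronglyMeasurable.smul
    hΦ.aestronglyMeasurable) (ae_of_all _ fun ⟨b, a⟩ => ?_)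
  by_cases ha : a ∈ Icc α β
  · have hinv : (a ^ 2)⁻¹ ≤ (α ^ 2)⁻¹ := inv_anti₀ (by positivity) (pow_le_pow_left₀ hα.le ha.1 2)
    rw [indicator_of_mem ha, Pi.one_apply, mul_one, norm_smul, Real.norm_of_nonneg (by positivity)]
    calc (a ^ 2)⁻¹ * ‖Φ (b, a)‖ ≤ (α ^ 2)⁻¹ * (C * (1 + b ^ 2)⁻¹) :=
          mul_le_mul hinv (hC b a) (norm_nonneg _) (by positivity)
      _ = C * (α ^ 2)⁻¹ * (1 + b ^ 2)⁻¹ := by ring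
  · simp [hsupp b a ha, indicator_of_notMem ha]

theorem integrable_muG_fourier_mul_fourier {F G : ℝ → ℝ → ℂ} (hF : ContDiff ℝ 2 (uncurry F))
    (hFs : HasCompactSupport (uncurry F)) (hG : ContDiff ℝ 2 (uncurry G))
    (hGs : HasCompactSupport (uncurry G)) {α β : ℝ} (hα : 0 < α)
    (hF0 : ∀ a ∉ Icc α β, F a = 0) :
    Integrable (fun p : ℝ × ℝ => 𝓕 (F p.2) p.1 * 𝓕 (G p.2) p.1) muG := by
  obtain ⟨C₁, hC₁⟩ := exists_norm_fourier_le_of_hasCompactSupport_uncurry hF hFs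
  obtain ⟨C₂, hC₂⟩ := exists_norm_fourier_le_of_hasCompactSupport_uncurry hG hGs
  have hC₂0 : 0 ≤ C₂ := by simpa using (norm_nonneg _).trans (hC₂ 0 0)
  refine integrable_muG_of_norm_le ((continuous_fourier_uncurry hF.continuous hFs).mul
    (continuous_fourier_uncurry hG.continuous hGs)) hα (β := β) (C := C₁ * C₂)
    (fun b a ha => by simp [hF0 a ha, Real.fourier_eq]) fun b a => ?_
  have hle : (1 + b ^ 2)⁻¹ ≤ 1 := inv_le_one_of_one_le₀ (le_add_of_nonneg_right (sq_nonneg b))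
  calc ‖𝓕 (F a) b * 𝓕 (G a) b‖ ≤ C₁ * (1 + b ^ 2)⁻¹ * C₂ := by
        rw [norm_mul]
        exact mul_le_mul (hC₁ a b) ((hC₂ a b).trans (mul_le_of_le_one_right hC₂0 hle))
          (norm_nonneg _) ((norm_nonneg _).trans (hC₁ a b))
    _ = C₁ * C₂ * (1 + b ^ 2)⁻¹ := by ring

end HaarMeasure

/-- **Orthogonality of coefficient functions of `π₊` and `π₋`**
(Proposition 4.5(c) of Choi–Ghandehari): for `ξᵢ, ηᵢ ∈ C_c²((0,∞))`,
`⟨ξ₁ *₊ η₁, ξ₂ *₋ η₂⟩_{L²(G)} = 0`. -/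
theorem orthogonality_plus_minus (ξ₁ η₁ ξ₂ η₂ : ℝ → ℂ)
    (hξ₁ : CcTwo ξ₁) (hη₁ : CcTwo η₁) (hξ₂ : CcTwo ξ₂) (hη₂ : CcTwo η₂) :
    Integrable (fun p : ℝ × ℝ =>
      coeffP ξ₁ η₁ p.1 p.2 * starRingEnd ℂ (coeffM ξ₂ η₂ p.1 p.2)) muG ∧
    ∫ p, coeffP ξ₁ η₁ p.1 p.2 * starRingEnd ℂ (coeffM ξ₂ η₂ p.1 p.2) ∂muG = 0 := by
  have hξ₂' := hξ₂.conj
  have hη₂' := hη₂.conj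
  have hfourier : (fun p : ℝ × ℝ => coeffP ξ₁ η₁ p.1 p.2 * starRingEnd ℂ (coeffM ξ₂ η₂ p.1 p.2))
      = fun p => 𝓕 (coeffKernel ξ₁ η₁ p.2) p.1 * 𝓕 (coeffKernel
          (fun t => starRingEnd ℂ (ξ₂ t)) (fun t => starRingEnd ℂ (η₂ t)) p.2) p.1 :=
    funext fun p => by
      rw [starRingEnd_coeffM, coeffP_eq_fourier_coeffKernel hη₁.2.2,
        coeffP_eq_fourier_coeffKernel hη₂'.2.2]
  obtain ⟨α, β, hα, hF0⟩ := hξ₁.exists_pos_coeffKernel_eq_zero hη₁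
  have hint := integrable_muG_fourier_mul_fourier
    (contDiff_uncurry_coeffKernel hξ₁.1 hη₁.1 hη₁.2.2)
    (hξ₁.hasCompactSupport_uncurry_coeffKernel hη₁)
    (contDiff_uncurry_coeffKernel hξ₂'.1 hη₂'.1 hη₂'.2.2)
    (hξ₂'.hasCompactSupport_uncurry_coeffKernel hη₂') hα hF0
  rw [hfourier]
  refine ⟨hint, ?_⟩
  simp [integral_muG_eq hint,
    integral_fourier_coeffKernel_mul_eq_zero hξ₁.1.continuous hη₁ hξ₂'.1 hη₂']
end

section
/- Let ξ, η ∈ C_c²((0,∞)) and let (Kξ)(t) = t·ξ(t). Then there is a compact set S ⊂ (0,∞) such that (ξ *₊ η)(b,a) = 0 whenever a ∉ S; and for every a > 0, the function b ↦ (ξ *₊ η)(b,a) is integrable on ℝ with ∫_ℝ |(ξ *₊ η)(b,a)| db ≤ ‖𝓕u‖_{L¹(ℝ)} · ‖𝓕v‖_{L¹(ℝ)}, where u, v : ℝ → ℂ are the extensions by zero of ξ and of t ↦ t⁻¹·conj(η(t)) respectively, and 𝓕 denotes the Fourier transform on ℝ, 𝓕f(b) = ∫_ℝ f(x) e^{−2πi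 b x} dx. -/
open MeasureTheory Set

/-!
For `a > 0`, `b ↦ (ξ *₊ η)(b, a)` is the Fourier transform of `f g`, where `f t = ξ (a t)` and
`g t = t⁻¹ conj (η t)`, so by Fourier inversion it is the convolution `𝓕 f ⋆ 𝓕 g`. Two
integrations by parts make the Fourier transform of a compactly supported `C²` function
`O((1 + w²)⁻¹)`, hence integrable, and Young's inequality in `L¹` gives the bound, since dilation
does not change `‖𝓕 f‖₁`. The coefficient vanishes unless `a = (a t) / t` with `a t ∈ supp ξ`
and `t ∈ supp η`.
-/

open Complex FourierTransform Real ContinuousLinearMap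
open scoped Convolution

section Convolution

variable {𝕜 G E E' F : Type*} [RCLike 𝕜] [NormedAddCommGroup E] [NormedAddCommGroup E']
  [NormedAddCommGroup F] [NormedSpace 𝕜 E] [NormedSpace 𝕜 E'] [NormedSpace ℝ F]
  [NormedSpace 𝕜 F] [AddGroup G] [MeasurableSpace G] [MeasurableAdd₂ G] [MeasurableNeg G]
  {μ : Measure G} [SFinite μ] [μ.IsAddRightInvariant]

theorem integral_norm_convolution_le (L : E →L[𝕜] E' →L[𝕜] F) {f : G → E} {g : G → E'}
    (hf : Integrable f μ) (hg : Integrable g μ) :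
    ∫ x, ‖(f ⋆[L, μ] g) x‖ ∂μ ≤ ‖L‖ * ((∫ x, ‖f x‖ ∂μ) * ∫ x, ‖g x‖ ∂μ) := by
  have hnorm := hf.norm.integrable_convolution (mul ℝ ℝ) hg.norm
  calc ∫ x, ‖(f ⋆[L, μ] g) x‖ ∂μ
      ≤ ∫ x, ‖L‖ * ((fun t ↦ ‖f t‖) ⋆[mul ℝ ℝ, μ] fun t ↦ ‖g t‖) x ∂μ := by
        refine integral_mono_ae (hf.integrable_convolution L hg).norm (hnorm.const_mul _) ?_
        filter_upwards [hf.norm.ae_convolution_exists (mul ℝ ℝ) hg.norm] with x hx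
        rw [convolution_def, convolution_def, ← integral_const_mul]
        refine norm_integral_le_of_norm_le (hx.integrable.const_mul _) (ae_of_all _ fun t ↦ ?_)
        simpa [mul_assoc] using L.le_opNorm₂ (f t) (g (x - t))
    _ = ‖L‖ * ((∫ x, ‖f x‖ ∂μ) * ∫ x, ‖g x‖ ∂μ) := by
        rw [integral_const_mul, integral_convolution (mul ℝ ℝ) hf.norm hg.norm, mul_apply']

end Convolution

theorem HasCompactSupport.iteratedDeriv {E : Type*} [NormedAddCommGroup E] [NormedSpace ℝ E]
    {f : ℝ → E} (hf : HasCompactSupport f) (n : ℕ) : HasCompactSupport (iteratedDeriv n f) := by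
  rw [iteratedDeriv_eq_iterate]
  induction n with
  | zero => exact hf
  | succ n ih => rw [Function.iterate_succ_apply']; exact ih.deriv

theorem ContDiff.ofReal_inv_mul {n : WithTop ℕ∞} {h : ℝ → ℂ} (hh : ContDiff ℝ n h)
    (h0 : 0 ∉ tsupport h) : ContDiff ℝ n fun t : ℝ ↦ (t : ℂ)⁻¹ * h t := by
  refine contDiff_iff_contDiffAt.mpr fun t ↦ ?_
  rcases eq_or_ne t 0 with rfl | ht
  · refine (contDiffAt_const (c := (0 : ℂ))).congr_of_eventuallyEq ?_
    filter_upwards [notMem_tsupport_iff_eventuallyEq.mp h0] with s hs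
    simp [hs]
  · exact (ofRealCLM.contDiff.contDiffAt.inv (ofReal_ne_zero.mpr ht)).mul hh.contDiffAt

namespace Real

variable {E : Type*} [NormedAddCommGroup E] [NormedSpace ℂ E]

theorem integrable_fourier_of_contDiff_two {f : ℝ → E} (hf : ContDiff ℝ 2 f)
    (hint : ∀ n : ℕ, n ≤ 2 → Integrable (iteratedDeriv n f)) : Integrable (𝓕 f) := by
  set C := (∫ x, ‖f x‖) + ∫ x, ‖iteratedDeriv 2 f x‖
  have hbound (w : ℝ) : ‖𝓕 f w‖ ≤ C * (1 + w ^ 2)⁻¹ := by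
    have hle (g : ℝ → E) : ‖𝓕 g w‖ ≤ ∫ x, ‖g x‖ :=
      VectorFourier.norm_fourierIntegral_le_integral_norm _ _ _ _ _
    have h2 : (2 * π * w) ^ 2 * ‖𝓕 f w‖ ≤ ∫ x, ‖iteratedDeriv 2 f x‖ := by
      have := hle (iteratedDeriv 2 f)
      rw [fourier_iteratedDeriv hf (by exact_mod_cast hint) le_rfl] at this
      simpa [norm_smul, abs_of_nonneg pi_pos.le, mul_pow] using this
    have hw : w ^ 2 ≤ (2 * π * w) ^ 2 := by
      have : (1 : ℝ) ≤ (2 * π) ^ 2 := one_le_pow₀ (by linarith [pi_gt_three])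
      rw [mul_pow]; nlinarith [sq_nonneg w]
    have h0 := hle f
    rw [← div_eq_mul_inv, le_div_iff₀ (by positivity)]
    nlinarith [norm_nonneg (𝓕 f w)]
  have hcont : Continuous (𝓕 f) :=
    VectorFourier.fourierIntegral_continuous continuous_fourierChar continuous_inner
      (hint 0 (by norm_num))
  exact (integrable_inv_one_add_sq.const_mul C).mono' hcont.aestronglyMeasurable
    (ae_of_all _ hbound)

theorem _root_.HasCompactSupport.integrable_fourier_of_contDiff_two {f : ℝ → E}
    (hc : HasCompactSupport f) (hf : ContDiff ℝ 2 f) : Integrable (𝓕 f) :=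
  Real.integrable_fourier_of_contDiff_two hf fun n hn ↦
    (hf.continuous_iteratedDeriv n (by exact_mod_cast hn)).integrable_of_hasCompactSupport
      (hc.iteratedDeriv n)

theorem fourier_comp_mul_left (f : ℝ → E) {a : ℝ} (ha : a ≠ 0) (w : ℝ) :
    𝓕 (fun t ↦ f (a * t)) w = |a⁻¹| • 𝓕 f (a⁻¹ * w) := by
  simp only [fourier_real_eq]
  rw [← Measure.integral_comp_mul_left (fun t ↦ 𝐞 (-(t * (a⁻¹ * w))) • f t) a]
  congr! 4 with t
  field_simp

theorem integral_norm_fourier_comp_mul_left (f : ℝ → E) {a : ℝ} (ha : a ≠ 0) :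
    ∫ w, ‖𝓕 (fun t ↦ f (a * t)) w‖ = ∫ w, ‖𝓕 f w‖ := by
  simp_rw [fourier_comp_mul_left f ha, norm_smul]
  rw [integral_const_mul, Measure.integral_comp_inv_mul_left (fun w ↦ ‖𝓕 f w‖), smul_eq_mul,
    Real.norm_eq_abs, abs_abs, abs_inv, ← mul_assoc, inv_mul_cancel₀ (abs_ne_zero.mpr ha),
    one_mul]

theorem fourier_smul_eq_convolution [CompleteSpace E] {f : ℝ → ℂ} {g : ℝ → E}
    (hf : Continuous f) (hfi : Integrable f) (hFf : Integrable (𝓕 f)) (hgi : Integrable g) :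
    𝓕 (fun t ↦ f t • g t) = 𝓕 f ⋆[lsmul ℂ ℂ] 𝓕 g := by
  ext b
  have hinv (t : ℝ) : f t = ∫ s, 𝐞 (s * t) • 𝓕 f s := by
    rw [← hfi.fourierInv_fourier_eq hFf hf.continuousAt, fourierInv_eq]
    simp [mul_comm]
  have hphase (s t : ℝ) : 𝐞 (-(t * b)) * 𝐞 (s * t) = 𝐞 (-(t * (b - s))) := by
    rw [← AddChar.map_add_eq_mul]; ring_nf
  set F : ℝ → ℝ → E := fun s t ↦ 𝐞 (-(t * (b - s))) • 𝓕 f s • g t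
  have hF : Integrable (Function.uncurry F) (volume.prod volume) := by
    refine (hFf.smul_prod hgi).mono ?_ (ae_of_all _ fun ⟨s, t⟩ ↦ by simp [F, Circle.norm_smul])
    exact (continuous_fourierChar.comp (by fun_prop)).aestronglyMeasurable.smul
      (hFf.smul_prod hgi).aestronglyMeasurable
  calc 𝓕 (fun t ↦ f t • g t) b
      = ∫ t, ∫ s, F s t := by
        rw [fourier_real_eq]
        congr 1 with t
        rw [hinv t, ← integral_smul_const, Circle.smul_def, ← integral_smul]
        congr 1 with s
        simp only [F, ← hphase s t, Circle.smul_def, Circle.coe_mul, smul_smul, smul_eq_mul,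
          mul_assoc]
    _ = ∫ s, ∫ t, F s t := (integral_integral_swap hF).symm
    _ = (𝓕 f ⋆[lsmul ℂ ℂ] 𝓕 g) b := by
        rw [convolution_def]
        congr 1 with s
        simp only [F, lsmul_apply, fourier_real_eq, Circle.smul_def, ← integral_smul]
        congr 1 with t
        rw [smul_comm]

end Real

theorem coeffP_eq_fourier (ξ : ℝ → ℂ) {η : ℝ → ℂ} (hη : Function.support η ⊆ Ioi 0) (b a : ℝ) :
    coeffP ξ η b a = 𝓕 (fun t ↦ ξ (a * t) * ((t : ℂ)⁻¹ * starRingEnd ℂ (η t))) b := by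
  rw [coeffP, setIntegral_eq_integral_of_forall_compl_eq_zero fun t ht ↦ ?_, fourier_real_eq]
  · congr 1 with t
    rw [Circle.smul_def, fourierChar_apply, smul_eq_mul]
    push_cast
    ring_nf
  · simp [Function.notMem_support.mp fun h ↦ ht (hη h)]

theorem coeffP_eq_zero_of_notMem_image_div {ξ η : ℝ → ℂ} {a : ℝ}
    (ha : a ∉ (fun p : ℝ × ℝ ↦ p.1 / p.2) '' (Function.support ξ ×ˢ Function.support η))
    (b : ℝ) : coeffP ξ η b a = 0 := by
  refine setIntegral_eq_zero_of_forall_eq_zero fun t (ht : 0 < t) ↦ ?_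
  by_contra hne
  refine ha ⟨(a * t, t), ⟨fun h ↦ hne ?_, fun h ↦ hne ?_⟩, by field_simp⟩ <;> simp [h]

theorem exists_isCompact_subset_Ioi_coeffP_eq_zero {ξ η : ℝ → ℂ} (hξc : HasCompactSupport ξ)
    (hξs : tsupport ξ ⊆ Ioi 0) (hηc : HasCompactSupport η) (hηs : tsupport η ⊆ Ioi 0) :
    ∃ S : Set ℝ, IsCompact S ∧ S ⊆ Ioi 0 ∧ ∀ a ∉ S, ∀ b, coeffP ξ η b a = 0 := by
  refine ⟨(fun p ↦ p.1 / p.2) '' (tsupport ξ ×ˢ tsupport η), ?_, ?_, fun a ha b ↦ ?_⟩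
  · exact (hξc.prod hηc).image_of_continuousOn
      (continuousOn_fst.div continuousOn_snd fun p hp ↦ (hηs hp.2).ne')
  · rintro _ ⟨⟨u, t⟩, ⟨hu, ht⟩, rfl⟩
    exact div_pos (mem_Ioi.mp (hξs hu)) (mem_Ioi.mp (hηs ht))
  · exact coeffP_eq_zero_of_notMem_image_div
      (fun h ↦ ha (image_mono (prod_mono (subset_tsupport ξ) (subset_tsupport η)) h)) b

theorem CcTwo.inv_mul_conj {η : ℝ → ℂ} (hη : CcTwo η) :
    CcTwo fun t ↦ (t : ℂ)⁻¹ * starRingEnd ℂ (η t) := by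
  obtain ⟨hη2, hηc, hηs⟩ := hη
  have hconj : tsupport (starRingEnd ℂ ∘ η) ⊆ tsupport η := tsupport_comp_subset (map_zero _) η
  refine ⟨(conjCLE.contDiff.comp hη2).ofReal_inv_mul fun h0 ↦ self_notMem_Ioi (hηs (hconj h0)),
    (hηc.comp_left (map_zero _)).mul_left, ?_⟩
  exact (tsupport_mul_subset_right (f := fun t : ℝ ↦ (t : ℂ)⁻¹)).trans (hconj.trans hηs)

-- As `ξ` and `η` vanish on `(-∞, 0]`, the functions `ξ` and `t ↦ t⁻¹ conj (η t)` below are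
-- already the extensions by zero `u` and `v` of the informal statement.
/-- Support and uniform-in-`a` `L¹` bound for convenient coefficient functions
(proof of Lemma 4.3 of Choi–Ghandehari).  For `ξ, η ∈ C_c²((0,∞))` there is a compact
set `S ⊂ (0,∞)` outside of which `ξ *₊ η` vanishes, and for each `a > 0` the function
`b ↦ (ξ *₊ η)(b,a)` is integrable with `L¹`-norm at most
`‖𝓕ξ‖_{L¹} ⬝ ‖𝓕(t ↦ t⁻¹ conj(η t))‖_{L¹}`.  (Note that since `ξ` and `η` are supported
in `(0,∞)`, and `(0:ℝ)⁻¹ = 0` in Lean, the functions `ξ` and `t ↦ t⁻¹ ⬝ conj (η t)`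
are already equal to the extensions by zero described in the paper.) -/
theorem coefficient_function_support_and_L1_bound (ξ η : ℝ → ℂ)
    (hξ : CcTwo ξ) (hη : CcTwo η) :
    ∃ S : Set ℝ, IsCompact S ∧ S ⊆ Ioi (0 : ℝ) ∧
      (∀ a : ℝ, a ∉ S → ∀ b : ℝ, coeffP ξ η b a = 0) ∧
      (∀ a : ℝ, 0 < a →
        Integrable (fun b : ℝ => coeffP ξ η b a) volume ∧
        (∫ b : ℝ, ‖coeffP ξ η b a‖) ≤
          (∫ b : ℝ, ‖FourierTransform.fourier ξ b‖) *
          (∫ b : ℝ, ‖FourierTransform.fourier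
              (fun t : ℝ => (t : ℂ)⁻¹ * starRingEnd ℂ (η t)) b‖)) := by
  obtain ⟨S, hS, hS0, hvanish⟩ :=
    exists_isCompact_subset_Ioi_coeffP_eq_zero hξ.2.1 hξ.2.2 hη.2.1 hη.2.2
  refine ⟨S, hS, hS0, hvanish, fun a ha ↦ ?_⟩
  set f : ℝ → ℂ := fun t ↦ ξ (a * t)
  set g : ℝ → ℂ := fun t ↦ (t : ℂ)⁻¹ * starRingEnd ℂ (η t)
  have hf2 : ContDiff ℝ 2 f := hξ.1.comp (contDiff_const.mul contDiff_id)
  have hfc : HasCompactSupport f := hξ.2.1.comp_homeomorph (Homeomorph.mulLeft₀ a ha.ne')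
  obtain ⟨hg2, hgc, -⟩ := hη.inv_mul_conj
  have hFf := hfc.integrable_fourier_of_contDiff_two hf2
  have hFg := hgc.integrable_fourier_of_contDiff_two hg2
  have hconv : (fun b ↦ coeffP ξ η b a) = 𝓕 f ⋆[lsmul ℂ ℂ] 𝓕 g := by
    ext b
    rw [coeffP_eq_fourier ξ ((subset_tsupport η).trans hη.2.2), ← fourier_smul_eq_convolution
      hf2.continuous (hf2.continuous.integrable_of_hasCompactSupport hfc) hFf
      (hg2.continuous.integrable_of_hasCompactSupport hgc)]
    rfl
  refine ⟨hconv ▸ hFf.integrable_convolution _ hFg, ?_⟩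
  calc (∫ b, ‖coeffP ξ η b a‖)
      ≤ ‖lsmul ℂ ℂ‖ * ((∫ w, ‖𝓕 f w‖) * ∫ w, ‖𝓕 g w‖) :=
        hconv ▸ integral_norm_convolution_le _ hFf hFg
    _ ≤ (∫ w, ‖𝓕 f w‖) * ∫ w, ‖𝓕 g w‖ :=
        mul_le_of_le_one_left (by positivity) opNorm_lsmul_le
    _ = _ := by rw [integral_norm_fourier_comp_mul_left ξ ha.ne']
end
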